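/- The unit program 1_A = {a ← a : a ∈ A} is a two-sided identity for sequential composition: for every answer set program P over A, P ∘ 1_A = P and 1_A ∘ P = P. Hence the set of all answer set programs over A forms a finite unital magma under composition. -/

import Mathlib

open Classical Finset

/-- A rule of an answer set program: a head atom, a set of positive body atoms,
and a set of negated body atoms. -/
structure Rule (α : Type*) where
  head : α
  pos : Finset α
  neg : Finset α
deriving DecidableEq

instance {α : Type*} [DecidableEq α] [Fintype α] : Fintype (Rule α) :=
  Fintype.ofEquiv (α × Finset α × Finset α)
    { toFun := fun x => ⟨x.1, x.2.1, x.2.2⟩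
      invFun := fun r => (r.head, r.pos, r.neg)
      left_inv := fun _ => rfl
      right_inv := fun _ => rfl }

variable {α : Type*} [Fintype α] [DecidableEq α]

/-- Program-level negation (the tf/∨/De Morgan construction):
for each head atom `a`, either no rule of `R` has head `a` (then the fact `a` is produced),
or one negated literal is chosen from the body of each rule of `R` with head `a`
(De Morgan + distributivity); heads of facts of `R` are dropped (their body `{t}` negates to `f`). -/
noncomputable def notProg {α : Type*} [Fintype α] [DecidableEq α]
    (R : Finset (Rule α)) : Finset (Rule α) :=
  Finset.univ.filter (fun t =>
    ((∀ s ∈ R, s.head ≠ t.head) ∧ t.pos = ∅ ∧ t.neg = ∅) ∨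
    ((∃ s ∈ R, s.head = t.head) ∧
      ∃ c : Rule α → α ⊕ α,
        (∀ s ∈ R, s.head = t.head →
          Sum.elim (fun b => b ∈ s.pos) (fun b => b ∈ s.neg) (c s)) ∧
        t.pos.image Sum.inl ∪ t.neg.image Sum.inr =
          (R.filter (fun s => s.head = t.head)).image (fun s => Sum.swap (c s))))

/-- Sequential composition of answer set programs. -/
noncomputable def comp {α : Type*} [Fintype α] [DecidableEq α]
    (P R : Finset (Rule α)) : Finset (Rule α) :=
  Finset.univ.filter (fun t => ∃ r ∈ P, ∃ S N : Finset (Rule α),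
    S ⊆ R ∧ N ⊆ notProg R ∧
    S.card = r.pos.card ∧ N.card = r.neg.card ∧
    S.image Rule.head = r.pos ∧ N.image Rule.head = r.neg ∧
    t.head = r.head ∧
    t.pos = (S ∪ N).sup Rule.pos ∧
    t.neg = (S ∪ N).sup Rule.neg)

/-- The unit program `1_A = {a ← a : a ∈ A}`. -/
def unitP (α : Type*) [Fintype α] [DecidableEq α] : Finset (Rule α) :=
  Finset.univ.image (fun a => (⟨a, {a}, ∅⟩ : Rule α))

/-- An interpretation viewed as a fact program. -/
def interp {α : Type*} [Fintype α] [DecidableEq α] (I : Finset α) : Finset (Rule α) :=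
  I.image (fun a => (⟨a, ∅, ∅⟩ : Rule α))

/-- The facts (rules with empty body) of a program. -/
noncomputable def factsOf {α : Type*} [Fintype α] [DecidableEq α]
    (P : Finset (Rule α)) : Finset (Rule α) :=
  P.filter (fun r => r.pos = ∅ ∧ r.neg = ∅)

/-- The van Emden–Kowalski immediate consequence operator. -/
noncomputable def TP {α : Type*} [Fintype α] [DecidableEq α]
    (P : Finset (Rule α)) (I : Finset α) : Finset α :=
  (P.filter (fun r => r.pos ⊆ I ∧ Disjoint r.neg I)).image Rule.head

/-!
The negation of `1_A` consists exactly of the rules `a ← not a`. Hence in `P ∘ 1_A` every body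
literal `a` (resp. `not a`) of a rule of `P` is resolved against the single rule `a ← a`
(resp. `a ← not a`), which gives the literal back. In `1_A ∘ P` the body `{a}` of `a ← a` is
resolved against one rule of `P` with head `a`, which is returned unchanged.
-/

attribute [ext] Rule

omit [Fintype α] [DecidableEq α] in
def idRule (a : α) : Rule α := ⟨a, {a}, ∅⟩

-- `notProg` sends the rule `a ← a` to this rule `a ← not a`.
omit [Fintype α] [DecidableEq α] in
def notIdRule (a : α) : Rule α := ⟨a, ∅, {a}⟩

omit [Fintype α] [DecidableEq α] in
lemma idRule_injective : Function.Injective (idRule : α → Rule α) :=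
  fun _ _ h => congrArg Rule.head h

omit [Fintype α] [DecidableEq α] in
lemma notIdRule_injective : Function.Injective (notIdRule : α → Rule α) :=
  fun _ _ h => congrArg Rule.head h

lemma mem_unitP_iff {r : Rule α} : r ∈ unitP α ↔ r.pos = {r.head} ∧ r.neg = ∅ := by
  constructor
  · intro h
    obtain ⟨a, -, rfl⟩ := mem_image.mp h
    exact ⟨rfl, rfl⟩
  · rintro ⟨hpos, hneg⟩
    exact mem_image.mpr ⟨r.head, mem_univ _, Rule.ext rfl hpos.symm hneg.symm⟩

lemma idRule_mem_unitP (a : α) : idRule a ∈ unitP α :=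
  mem_unitP_iff.mpr ⟨rfl, rfl⟩

lemma filter_head_unitP (a : α) :
    (unitP α).filter (fun s => s.head = a) = {idRule a} := by
  ext s
  rw [mem_filter, mem_singleton, mem_unitP_iff]
  constructor
  · rintro ⟨⟨hpos, hneg⟩, rfl⟩
    exact Rule.ext rfl hpos hneg
  · rintro rfl
    exact ⟨⟨rfl, rfl⟩, rfl⟩

omit [Fintype α] in
lemma image_inl_union_image_inr_eq_singleton_inr {s u : Finset α} {a : α} :
    s.image Sum.inl ∪ u.image Sum.inr = {(Sum.inr a : α ⊕ α)} ↔ s = ∅ ∧ u = {a} := by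
  simp [Finset.ext_iff, Sum.forall]

lemma mem_notProg_unitP_iff {t : Rule α} :
    t ∈ notProg (unitP α) ↔ t.pos = ∅ ∧ t.neg = {t.head} := by
  simp only [notProg, mem_filter, mem_univ, true_and, filter_head_unitP, image_singleton]
  constructor
  · rintro (⟨hnone, -⟩ | ⟨-, c, hc, himage⟩)
    · exact (hnone _ (idRule_mem_unitP t.head) rfl).elim
    · -- the only literal to choose from the body of `a ← a` is `a` itself
      have hc_id : c (idRule t.head) = Sum.inl t.head := by
        have := hc _ (idRule_mem_unitP t.head) rfl
        rcases h : c (idRule t.head) with b | b <;> simp_all [idRule]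
      rwa [hc_id, Sum.swap_inl, image_inl_union_image_inr_eq_singleton_inr] at himage
  · rintro ⟨hpos, hneg⟩
    refine Or.inr ⟨⟨_, idRule_mem_unitP t.head, rfl⟩, fun s => Sum.inl s.head, ?_, ?_⟩
    · intro s hs _
      simp [(mem_unitP_iff.mp hs).1]
    · rw [Sum.swap_inl, image_inl_union_image_inr_eq_singleton_inr]
      exact ⟨hpos, hneg⟩

omit [Fintype α] in
lemma sup_eq_image_of_forall_eq_singleton {S : Finset (Rule α)} {f : Rule α → Finset α}
    (h : ∀ r ∈ S, f r = {r.head}) : S.sup f = S.image Rule.head := by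
  rw [← sup_singleton_apply]
  exact sup_congr rfl h

omit [Fintype α] in
lemma sup_eq_empty_of_forall_eq_empty {S : Finset (Rule α)} {f : Rule α → Finset α}
    (h : ∀ r ∈ S, f r = ∅) : S.sup f = ∅ :=
  (Finset.sup_eq_bot_iff f S).mpr h

lemma sup_pos_union_of_subset_unitP {S N : Finset (Rule α)} (hS : S ⊆ unitP α)
    (hN : N ⊆ notProg (unitP α)) : (S ∪ N).sup Rule.pos = S.image Rule.head := by
  rw [sup_union,
    sup_eq_image_of_forall_eq_singleton fun r hr => (mem_unitP_iff.mp (hS hr)).1,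
    sup_eq_empty_of_forall_eq_empty fun r hr => (mem_notProg_unitP_iff.mp (hN hr)).1,
    sup_eq_union, union_empty]

lemma sup_neg_union_of_subset_unitP {S N : Finset (Rule α)} (hS : S ⊆ unitP α)
    (hN : N ⊆ notProg (unitP α)) : (S ∪ N).sup Rule.neg = N.image Rule.head := by
  rw [sup_union,
    sup_eq_empty_of_forall_eq_empty fun r hr => (mem_unitP_iff.mp (hS hr)).2,
    sup_eq_image_of_forall_eq_singleton fun r hr => (mem_notProg_unitP_iff.mp (hN hr)).2,
    sup_eq_union, empty_union]

omit [Fintype α] in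
lemma image_head_image_idRule (s : Finset α) : (s.image idRule).image Rule.head = s := by
  rw [image_image]; exact image_id

omit [Fintype α] in
lemma image_head_image_notIdRule (s : Finset α) : (s.image notIdRule).image Rule.head = s := by
  rw [image_image]; exact image_id

lemma comp_unitP (P : Finset (Rule α)) : comp P (unitP α) = P := by
  ext t
  simp only [comp, mem_filter, mem_univ, true_and]
  constructor
  · rintro ⟨r, hr, S, N, hS, hN, -, -, hSr, hNr, hhead, hpos, hneg⟩
    rw [sup_pos_union_of_subset_unitP hS hN, hSr] at hpos
    rw [sup_neg_union_of_subset_unitP hS hN, hNr] at hneg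
    rwa [Rule.ext hhead hpos hneg]
  · intro ht
    have hS : t.pos.image idRule ⊆ unitP α := by
      simpa only [image_subset_iff] using fun a _ => idRule_mem_unitP a
    have hN : t.neg.image notIdRule ⊆ notProg (unitP α) := by
      simpa only [image_subset_iff] using fun a _ => mem_notProg_unitP_iff.mpr ⟨rfl, rfl⟩
    refine ⟨t, ht, _, _, hS, hN, card_image_of_injective _ idRule_injective,
      card_image_of_injective _ notIdRule_injective, image_head_image_idRule _,
      image_head_image_notIdRule _, rfl, ?_, ?_⟩
    · rw [sup_pos_union_of_subset_unitP hS hN, image_head_image_idRule]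
    · rw [sup_neg_union_of_subset_unitP hS hN, image_head_image_notIdRule]

lemma unitP_comp (P : Finset (Rule α)) : comp (unitP α) P = P := by
  ext t
  simp only [comp, mem_filter, mem_univ, true_and]
  constructor
  · rintro ⟨r, hr, S, N, hSP, -, hScard, hNcard, hSr, -, hhead, hpos, hneg⟩
    obtain ⟨hrpos, hrneg⟩ := mem_unitP_iff.mp hr
    obtain rfl : N = ∅ := card_eq_zero.mp (by rw [hNcard, hrneg, card_empty])
    obtain ⟨s, rfl⟩ := card_eq_one.mp (by rw [hScard, hrpos, card_singleton])
    have hs : s.head = r.head := by simpa [hrpos] using hSr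
    rw [union_empty, sup_singleton] at hpos hneg
    rw [Rule.ext (hhead.trans hs.symm) hpos hneg]
    exact hSP (mem_singleton_self s)
  · intro ht
    refine ⟨idRule t.head, idRule_mem_unitP t.head, {t}, ∅, singleton_subset_iff.mpr ht,
      empty_subset _, rfl, rfl, rfl, rfl, rfl, ?_, ?_⟩ <;> simp

/-- the unit program is a two-sided identity for composition,
so programs over `α` form a (finite) unital magma. -/
theorem comp_unit {α : Type*} [Fintype α] [DecidableEq α] :
    ∀ P : Finset (Rule α), comp P (unitP α) = P ∧ comp (unitP α) P = P :=
  fun P => ⟨comp_unitP P, unitP_comp P⟩
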